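/- arXiv:0812.4498 — 3 statements merged into one kernel-verified Lean document; each statement's English description precedes it below -/
import Mathlib

section
/- Let T be a smooth (1,1)-tensor field on a smooth manifold M of dimension at least 2. Then the Lie derivative L_X T vanishes for all vector fields X if and only if T is a (locally) constant multiple of the identity tensor. -/
open VectorField

/-- The Lie derivative of a smooth `(1,1)`-tensor field `T` along a vector
field `X`, evaluated on a vector field `Y`:
`(L_X T)Y = [X, TY] − T[X, Y]`.  Here the manifold is an open chart, i.e. a
real vector space `E`, vector fields are maps `E → E`, and `(1,1)`-tensor
fields are maps `E → (E →L[ℝ] E)`. -/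
noncomputable def tensorLieDeriv {E : Type*} [NormedAddCommGroup E] [NormedSpace ℝ E]
    (X : E → E) (T : E → E →L[ℝ] E) (Y : E → E) (x : E) : E :=
  lieBracket ℝ X (fun y => T y (Y y)) x - T x (lieBracket ℝ X Y x)

/-- a smooth `(1,1)`-tensor field `T` on a connected smooth
manifold of dimension at least `2` satisfies `L_X T = 0` for all (smooth)
vector fields `X` if and only if `T` is a (locally) constant multiple of the
identity tensor. -/
theorem lieDeriv_vanishes_iff_constant_multiple_of_id
    {E : Type*} [NormedAddCommGroup E] [NormedSpace ℝ E] [FiniteDimensional ℝ E]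
    (hdim : 2 ≤ Module.finrank ℝ E)
    (T : E → E →L[ℝ] E) (hT : ContDiff ℝ (⊤ : ℕ∞) (fun x => T x)) :
    (∀ X : E → E, ContDiff ℝ (⊤ : ℕ∞) X →
      ∀ Y : E → E, ContDiff ℝ (⊤ : ℕ∞) Y → ∀ x, tensorLieDeriv X T Y x = 0) ↔
    ∃ τ : ℝ, ∀ x, T x = τ • ContinuousLinearMap.id ℝ E := by
  constructor
  · intro h
    -- Step 1: T is constant.
    have hTw : ∀ w : E, ContDiff ℝ (⊤ : ℕ∞) (fun x => T x w) :=
      fun w => hT.clm_apply contDiff_const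
    have hconst : ∀ x w, T x w = T 0 w := by
      intro x w
      have hzero : ∀ v x, fderiv ℝ (fun y => T y w) x v = 0 := by
        intro v x
        have := h (fun _ => v) contDiff_const (fun _ => w) contDiff_const x
        simpa [tensorLieDeriv, lieBracket, fderiv_const] using this
      have : ∀ x, fderiv ℝ (fun y => T y w) x = 0 := by
        intro x; ext v; simpa using hzero v x
      exact is_const_of_fderiv_eq_zero ((hTw w).differentiable (by simp)) this x 0
    have hTc : ∀ x, T x = T 0 := by
      intro x; ext w; exact hconst x w
    -- Step 2: T 0 commutes with every continuous linear map.
    have hcomm : ∀ (B : E →L[ℝ] E) (w : E), T 0 (B w) = B (T 0 w) := by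
      intro B w
      have hB : ContDiff ℝ (⊤ : ℕ∞) (fun x => B x) := B.contDiff
      have := h (fun x => B x) hB (fun _ => w) contDiff_const 0
      simp only [tensorLieDeriv, lieBracket, fderiv_const, fderiv_fun_const, hTc] at this
      simp only [B.fderiv] at this
      simp only [Pi.zero_apply, ContinuousLinearMap.zero_apply, zero_sub, map_neg,
        zero_sub, sub_neg_eq_add, neg_add_eq_zero] at this
      exact this.symm
    -- extract scalar
    have h1 : 0 < Module.finrank ℝ E := lt_of_lt_of_le (by norm_num) hdim
    have : Nontrivial E := Module.nontrivial_of_finrank_pos h1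
    obtain ⟨w, hw⟩ := exists_ne (0 : E)
    obtain ⟨g, hg1, hgw⟩ := exists_dual_vector ℝ w (norm_ne_zero_iff.mpr hw)
    set f : E →L[ℝ] ℝ := (‖w‖⁻¹ : ℝ) • g with hf
    have hfw : f w = 1 := by
      simp [hf, hgw]
      rw [inv_mul_cancel₀ (by simpa using hw)]
    refine ⟨f (T 0 w), fun x => ?_⟩
    rw [hTc x]
    ext e
    have := hcomm (f.smulRight e) w
    simp only [ContinuousLinearMap.smulRight_apply, hfw, one_smul, map_smul] at this
    simp [this]
  · intro ⟨τ, hτ⟩ X hX Y hY x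
    have hYd : DifferentiableAt ℝ Y x := (hY.differentiable (by simp)) x
    simp only [tensorLieDeriv, lieBracket, hτ, ContinuousLinearMap.smul_apply,
      ContinuousLinearMap.id_apply]
    rw [fderiv_fun_const_smul hYd]
    simp [smul_sub]
end

section
/- There is no Hopf hypersurface in CP² or CH² whose structure Jacobi operator R_W vanishes identically. Equivalently (algebraic form): there are no real numbers α, λ, ν, c with c ≠ 0 satisfying αλ + c = 0, αν + c = 0, and λν = ((λ+ν)/2)α + c. -/
/-!
Multiplying the Hopf relation by `α²` expresses both of its sides through the products `αλ` and
`αν`. If the structure Jacobi operator vanishes, both products equal `-c`, and the relation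
collapses to `c² = -cα² + cα² = 0`.
-/

theorem two_mul_sq_eq_zero_of_hopf_relation {R : Type*} [CommRing R] {α lam ν c : R}
    (hlam : α * lam + c = 0) (hν : α * ν + c = 0)
    (hopf : 2 * (lam * ν) = (lam + ν) * α + 2 * c) :
    2 * c ^ 2 = 0 := by
  linear_combination α ^ 2 * hopf + (α ^ 2 - 2 * α * ν) * hlam + (α ^ 2 + 2 * c) * hν

theorem eq_zero_of_hopf_relation {K : Type*} [Field K] [NeZero (2 : K)] {α lam ν c : K}
    (hlam : α * lam + c = 0) (hν : α * ν + c = 0)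
    (hopf : lam * ν = ((lam + ν) / 2) * α + c) :
    c = 0 := by
  have hopf₂ : 2 * (lam * ν) = (lam + ν) * α + 2 * c := by
    rw [hopf]
    field_simp
  have h := two_mul_sq_eq_zero_of_hopf_relation hlam hν hopf₂
  simpa [two_ne_zero] using h

/-- algebraic form: there is no Hopf hypersurface in ℂP² or ℂH²
with vanishing structure Jacobi operator.  For a Hopf hypersurface with shape
operator `diag(α, λ, ν)` the structure Jacobi operator is `diag(0, αλ+c, αν+c)`
and the Hopf relation `λν = ((λ+ν)/2)α + c` holds; there are no real numbers
`α, λ, ν, c` with `c ≠ 0` satisfying `αλ + c = 0`, `αν + c = 0` and the Hopf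
relation. -/
theorem no_hopf_with_vanishing_structure_jacobi :
    ¬ ∃ α lam ν c : ℝ, c ≠ 0 ∧ α * lam + c = 0 ∧ α * ν + c = 0 ∧
      lam * ν = ((lam + ν) / 2) * α + c := by
  rintro ⟨α, lam, ν, c, hc, hlam, hν, hopf⟩
  exact hc (eq_zero_of_hopf_relation hlam hν hopf)
end

section
/- Suppose c ≠ 0, and α, β, λ, μ, ν are real numbers with β ≠ 0 such that for the operators A (matrix rows (α,β,0),(β,λ,μ),(0,μ,ν)), φ (φW=0, φX=Y, φY=−X), and R_W (rows (0,0,0),(0,αλ+c−β²,αμ),(0,αμ,αν+c)) the commutator identity [R_W,[φ,A]] = 0 holds, and additionally R_W ≠ 0. Then μ = 0, αν + c = 0 (hence α ≠ 0), and λ = ν. -/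
open Matrix

/-!
The brackets are computed entrywise. Since `φ` rotates the `XY`-plane and kills `W`,
`[φ, A]` is again symmetric, so `[R_W, [φ, A]]` is skew and has only three independent
entries: `-αμβ`, `-(αν + c)β` and `(αλ - αν - β²)(λ - ν) + 4αμ²`. As `β ≠ 0` the first two
give `αν + c = 0` (so `α ≠ 0`, as `c ≠ 0`) and `μ = 0`. Then `R_W` reduces to its single
entry `αλ + c - β²`, which is nonzero because `R_W ≠ 0`, and the third entry, now
`(αλ + c - β²)(λ - ν)`, forces `λ = ν`.
-/

section Brackets

variable {R : Type*} [CommRing R]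

theorem rotation_mul_sub_mul_rotation (α β lam μ ν : R) :
    !![0, 0, 0; 0, 0, -1; 0, 1, 0] * !![α, β, 0; β, lam, μ; 0, μ, ν]
      - !![α, β, 0; β, lam, μ; 0, μ, ν] * !![0, 0, 0; 0, 0, -1; 0, 1, 0]
      = !![0, 0, β; 0, -2 * μ, lam - ν; β, lam - ν, 2 * μ] := by
  rw [mul_fin_three, mul_fin_three]
  ext i j
  fin_cases i <;> fin_cases j <;> simp <;> ring

theorem jacobi_mul_sub_mul_jacobi (p q r b d e f : R) :
    !![0, 0, 0; 0, p, q; 0, q, r] * !![0, 0, b; 0, e, d; b, d, f]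
      - !![0, 0, b; 0, e, d; b, d, f] * !![0, 0, 0; 0, p, q; 0, q, r]
      = !![0, -(q * b), -(r * b);
           q * b, 0, (p - r) * d + q * (f - e);
           r * b, -((p - r) * d + q * (f - e)), 0] := by
  rw [mul_fin_three, mul_fin_three]
  ext i j
  fin_cases i <;> fin_cases j <;> simp <;> ring

end Brackets

/-- algebraic content of Proposition 4.3: suppose `c ≠ 0`,
`β ≠ 0`, and, in the orthonormal frame `(W, X, Y)`, the shape operator
`A = ⟨(α,β,0),(β,λ,μ),(0,μ,ν)⟩`, the structure tensor `φ` (`φW = 0`,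
`φX = Y`, `φY = −X`) and the structure Jacobi operator
`R_W = ⟨(0,0,0),(0,αλ+c−β²,αμ),(0,αμ,αν+c)⟩` satisfy `[R_W,[φ,A]] = 0` and
`R_W ≠ 0`.  Then `μ = 0`, `αν + c = 0` (hence `α ≠ 0`) and `λ = ν`. -/
theorem nonHopf_lie_parallel_conditions (α β lam μ ν c : ℝ)
    (hc : c ≠ 0) (hβ : β ≠ 0)
    (A : Matrix (Fin 3) (Fin 3) ℝ) (hA : A = !![α, β, 0; β, lam, μ; 0, μ, ν])
    (φ : Matrix (Fin 3) (Fin 3) ℝ) (hφ : φ = !![0, 0, 0; 0, 0, -1; 0, 1, 0])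
    (RW : Matrix (Fin 3) (Fin 3) ℝ)
    (hRW : RW = !![0, 0, 0;
                   0, α * lam + c - β ^ 2, α * μ;
                   0, α * μ, α * ν + c])
    (hcomm : RW * (φ * A - A * φ) - (φ * A - A * φ) * RW = 0)
    (hRWne : RW ≠ 0) :
    μ = 0 ∧ α * ν + c = 0 ∧ α ≠ 0 ∧ lam = ν := by
  subst hA hφ hRW
  rw [rotation_mul_sub_mul_rotation, jacobi_mul_sub_mul_jacobi] at hcomm
  have hW_X : α * μ * β = 0 := by simpa using congrFun (congrFun hcomm 1) 0
  have hW_Y : (α * ν + c) * β = 0 := by simpa using congrFun (congrFun hcomm 2) 0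
  have hX_Y : (α * lam + c - β ^ 2 - (α * ν + c)) * (lam - ν) + α * μ * (2 * μ - -2 * μ) = 0 := by
    simpa using congrFun (congrFun hcomm 1) 2
  have hr : α * ν + c = 0 := (mul_eq_zero.mp hW_Y).resolve_right hβ
  have hα : α ≠ 0 := by rintro rfl; exact hc (by simpa using hr)
  have hμ : μ = 0 := by simpa [hα, hβ] using hW_X
  have hp : α * lam + c - β ^ 2 ≠ 0 := by
    intro hp
    apply hRWne
    rw [hp, hμ, mul_zero, hr]
    ext i j
    fin_cases i <;> fin_cases j <;> rfl
  have hlam : (α * lam + c - β ^ 2) * (lam - ν) = 0 := by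
    simpa [hr, hμ] using hX_Y
  exact ⟨hμ, hr, hα, sub_eq_zero.mp ((mul_eq_zero.mp hlam).resolve_left hp)⟩
end
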